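/- Let C be a chain complex of simplicial R-modules of length n+1: 0 → X_n → ⋯ → X_1 → X_0 → Y → 0, exact in each simplicial degree, such that π_j(X_i) = 0 for j ≤ N − i. Then π_j(Y) = 0 for j ≤ N. -/

import Mathlib

open CategoryTheory Limits AlgebraicTopology

variable {R : Type} [CommRing R]

/-- `π_j` of a simplicial `R`-module: the `j`-th homology of its normalized Moore complex. -/
noncomputable def simplicialPi (A : SimplicialObject (ModuleCat R)) (j : ℕ) : ModuleCat R :=
  ((normalizedMooreComplex (ModuleCat R)).obj A).homology j

/-!
By Dold–Kan, `π_j` may be computed with the alternating face map complex, which is applied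
levelwise to turn the resolution into a double complex with exact rows, target column `Y` and
column `i + 1` exact in degrees `≤ N - i`. A cycle of `Y` in degree `j ≤ N` lifts to column `1`,
its boundary lifts to column `2`, and so on down a staircase; by descending induction from the
vanishing column `n + 2`, every such element is a vertical boundary modulo the image of the next
column, so the original cycle is a boundary.
-/

namespace HomologicalComplex

variable {ι ι' : Type*} {c : ComplexShape ι} {c' : ComplexShape ι'}

lemma Hom.comm_apply {C D : HomologicalComplex (ModuleCat R) c} (φ : C ⟶ D) (a b : ι)
    (x : C.X a) : D.d a b (φ.f a x) = φ.f b (C.d a b x) :=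
  ConcreteCategory.congr_hom (φ.comm a b) x

lemma d_d_apply (C : HomologicalComplex (ModuleCat R) c) (a b b' : ι) (x : C.X a) :
    C.d b b' (C.d a b x) = 0 :=
  ConcreteCategory.congr_hom (C.d_comp_d a b b') x

lemma d_f_d_f_apply (K : HomologicalComplex (HomologicalComplex (ModuleCat R) c') c)
    (a b b' : ι) (p : ι') (x : (K.X a).X p) : (K.d b b').f p ((K.d a b).f p x) = 0 :=
  ConcreteCategory.congr_hom
    (show (K.d a b).f p ≫ (K.d b b').f p = 0 by rw [← comp_f, K.d_comp_d, zero_f]) x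

end HomologicalComplex

lemma ChainComplex.exactAt_iff_function_exact (C : ChainComplex (ModuleCat R) ℕ) (j : ℕ) :
    C.ExactAt j ↔ Function.Exact (C.d (j + 1) j) (C.d j (j - 1)) := by
  rw [C.exactAt_iff' (j + 1) j (j - 1) (by simp) (by cases j <;> simp)]
  exact ShortComplex.ShortExact.moduleCat_exact_iff_function_exact _

lemma simplicialPi_isZero_iff (A : SimplicialObject (ModuleCat R)) (j : ℕ) :
    IsZero (simplicialPi A j) ↔ ((alternatingFaceMapComplex (ModuleCat R)).obj A).ExactAt j := by
  rw [HomologicalComplex.exactAt_iff_isZero_homology]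
  exact (DoldKan.homotopyEquivNormalizedMooreComplexAlternatingFaceMapComplex
    (Y := A)).toHomologyIso j |>.isZero_iff

section Staircase

open HomologicalComplex

variable (K : ChainComplex (ChainComplex (ModuleCat R) ℕ) ℕ)

/-- The invariant of the staircase chase in column `c`, below the diagonal `p + c = N + 1`. -/
def StaircaseExact (N c : ℕ) : Prop :=
  ∀ p, p + c ≤ N + 1 → ∀ v : (K.X c).X p,
    (K.X c).d p (p - 1) v ∈ Set.range ((K.d (c + 1) c).f (p - 1)) →
      ∃ (u : (K.X c).X (p + 1)) (t : (K.X (c + 1)).X p),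
        v = (K.X c).d (p + 1) p u + (K.d (c + 1) c).f p t

variable {K}

lemma staircaseExact_of_isZero {c : ℕ} (hc : ∀ p, IsZero ((K.X c).X p)) (N : ℕ) :
    StaircaseExact K N c := by
  intro p _ v _
  have : Subsingleton ((K.X c).X p) := ModuleCat.isZero_iff_subsingleton.mp (hc p)
  exact ⟨0, 0, Subsingleton.elim _ _⟩

lemma StaircaseExact.of_succ {N c : ℕ}
    (hrow : ∀ p, Function.Exact ((K.d (c + 2) (c + 1)).f p) ((K.d (c + 1) c).f p))
    (hcol : ∀ p, p + c ≤ N + 1 → (K.X c).ExactAt p) (h : StaircaseExact K N (c + 1)) :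
    StaircaseExact K N c := by
  intro p hp v hv
  rcases p with _ | q
  · obtain ⟨u, rfl⟩ :=
      ((ChainComplex.exactAt_iff_function_exact _ 0).mp (hcol 0 (by omega)) v).mp (by simp)
    exact ⟨u, 0, by simp⟩
  · obtain ⟨w, hw⟩ : (K.X c).d (q + 1) q v ∈ Set.range ((K.d (c + 1) c).f q) := hv
    have hdw : (K.X (c + 1)).d q (q - 1) w ∈ Set.range ((K.d (c + 2) (c + 1)).f (q - 1)) := by
      apply (hrow (q - 1) _).mp
      rw [← Hom.comm_apply, hw, d_d_apply]
    obtain ⟨u, t, rfl⟩ := h q (by omega) w hdw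
    have hcycle : (K.X c).d (q + 1) q (v - (K.d (c + 1) c).f (q + 1) u) = 0 := by
      rw [map_sub, ← hw, map_add, d_f_d_f_apply, add_zero, ← Hom.comm_apply, sub_self]
    obtain ⟨u', hu'⟩ :=
      ((ChainComplex.exactAt_iff_function_exact _ _).mp (hcol (q + 1) hp) _).mp hcycle
    exact ⟨u', u, by rw [hu']; abel⟩

end Staircase

open HomologicalComplex in
theorem ChainComplex.exactAt_X_zero_of_exact_rows
    (K : ChainComplex (ChainComplex (ModuleCat R) ℕ) ℕ) (n N : ℕ)
    (htop : ∀ p, IsZero ((K.X (n + 2)).X p))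
    (hrow : ∀ c p, Function.Exact ((K.d (c + 2) (c + 1)).f p) ((K.d (c + 1) c).f p))
    (hsurj : ∀ p, Function.Surjective ((K.d 1 0).f p))
    (hcol : ∀ i p, i ≤ n → p + i ≤ N → (K.X (i + 1)).ExactAt p) :
    ∀ j ≤ N, (K.X 0).ExactAt j := by
  have hstair : StaircaseExact K N 1 := by
    refine Nat.decreasingInduction' (fun c _ h1c h => ?_) (by omega : 1 ≤ n + 2)
      (staircaseExact_of_isZero htop N)
    obtain ⟨i, rfl⟩ : ∃ i, c = i + 1 := ⟨c - 1, by omega⟩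
    exact h.of_succ (hrow _) fun p hp => hcol i p (by omega) (by omega)
  intro j hj
  rw [ChainComplex.exactAt_iff_function_exact]
  intro y
  constructor
  · intro hy
    obtain ⟨x, rfl⟩ := hsurj j y
    have hdx : (K.X 1).d j (j - 1) x ∈ Set.range ((K.d 2 1).f (j - 1)) :=
      (hrow 0 (j - 1) _).mp (by rw [← Hom.comm_apply, hy])
    obtain ⟨u, t, rfl⟩ := hstair j (by omega) x hdx
    exact ⟨(K.d 1 0).f (j + 1) u, by rw [Hom.comm_apply, map_add, d_f_d_f_apply, add_zero]⟩
  · rintro ⟨x, rfl⟩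
    exact d_d_apply _ _ _ _ x

/-- The resolution `0 → X_n → ⋯ → X_0 → Y → 0` is encoded as `D`, with `D.X 0 = Y` and
`D.X (i + 1) = X_i`. -/
theorem pi_isZero_of_levelwise_exact_resolution_general (R : Type) [CommRing R] (n N : ℕ)
    (D : ChainComplex (SimplexCategoryᵒᵖ ⥤ ModuleCat R) ℕ)
    (htop : ∀ i, n + 1 < i → IsZero (D.X i))
    (hexact : ∀ (i : ℕ) (m : SimplexCategoryᵒᵖ),
      Function.Exact ((D.d (i + 2) (i + 1)).app m) ((D.d (i + 1) i).app m))
    (hsurj : ∀ m : SimplexCategoryᵒᵖ, Function.Surjective ((D.d 1 0).app m))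
    (hconn : ∀ i ≤ n, ∀ j ≤ N - i, IsZero (simplicialPi (D.X (i + 1)) j)) :
    ∀ j ≤ N, IsZero (simplicialPi (D.X 0) j) := by
  intro j hj
  rw [simplicialPi_isZero_iff]
  exact ChainComplex.exactAt_X_zero_of_exact_rows
      ((alternatingFaceMapComplex (ModuleCat R)).mapHomologicalComplex _ |>.obj D) n N
      (fun _ => (htop (n + 2) (by omega)).obj _) (fun i _ => hexact i _) (fun _ => hsurj _)
      (fun i p hi hp => (simplicialPi_isZero_iff _ p).mp (hconn i hi p (by omega))) j hj

/-- Let `0 → X_n → ⋯ → X_1 → X_0 → Y → 0` be a complex of simplicial `R`-modules, exact in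
each simplicial degree, with `π_j(X_i) = 0` for `j ≤ N − i`.  Then `π_j(Y) = 0` for `j ≤ N`.
Here the complex is encoded as a chain complex `D` of simplicial modules with `D.X 0 = Y`,
`D.X (i+1) = X_i`, vanishing above degree `n+1`, levelwise exact in the middle, with
`X_n → X_{n-1}` levelwise injective and `X_0 → Y` levelwise surjective. -/
theorem pi_isZero_of_levelwise_exact_resolution (R : Type) [CommRing R] (n N : ℕ)
    (D : ChainComplex (SimplexCategoryᵒᵖ ⥤ ModuleCat R) ℕ)
    (htop : ∀ i, n + 1 < i → IsZero (D.X i))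
    (hinj : ∀ m : SimplexCategoryᵒᵖ, Function.Injective ((D.d (n + 1) n).app m))
    (hexact : ∀ (i : ℕ) (m : SimplexCategoryᵒᵖ),
      Function.Exact ((D.d (i + 2) (i + 1)).app m) ((D.d (i + 1) i).app m))
    (hsurj : ∀ m : SimplexCategoryᵒᵖ, Function.Surjective ((D.d 1 0).app m))
    (hconn : ∀ i ≤ n, ∀ j ≤ N - i, IsZero (simplicialPi (D.X (i + 1)) j)) :
    ∀ j ≤ N, IsZero (simplicialPi (D.X 0) j) :=
  pi_isZero_of_levelwise_exact_resolution_general R n N D htop hexact hsurj hconn
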